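/- Let a be a real number and define Φ : {(τ,η) ∈ ℝ² : τ > 0} → ℝ² by Φ(τ,η) = ( √(2τ)(3a²η² − τ²)/(3(a²η² + τ²)²), 2a²η(2τ)^{3/2}/(3(a²η² + τ²)²) ). Then Φ is differentiable on its domain and the determinant of its Jacobian matrix at (τ,η) equals 4a²τ(3a²η² + τ²)/(3(a²η² + τ²)⁴). In particular, if a ≠ 0 the Jacobian determinant is strictly positive at every point of the domain. -/

import Mathlib

/-!
With `s = √(2τ)`, i.e. `τ = s²/2`, each component of the map and each of its partial derivatives
is a rational function of `s`, `a`, `η`, so the Jacobian determinant is a polynomial identity once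
the four partials are known. Writing `A = a²η²`, it reduces to
`(3A² - 26Aτ² + 3τ⁴)(τ² - 3A) + 2A(5τ² - 3A)² = 3(A + τ²)²(3A + τ²)`.
-/

/-- First component of the closed-form period map of Family 1. -/
noncomputable def Phi1 (a τ η : ℝ) : ℝ :=
  Real.sqrt (2*τ) * (3*a^2*η^2 - τ^2) / (3*(a^2*η^2 + τ^2)^2)

/-- Second component of the closed-form period map of Family 1. -/
noncomputable def Phi2 (a τ η : ℝ) : ℝ :=
  2*a^2*η*(Real.sqrt (2*τ))^3 / (3*(a^2*η^2 + τ^2)^2)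

lemma exists_sqrt_two_mul_eq {τ : ℝ} (hτ : 0 < τ) : ∃ s, 0 < s ∧ √(2 * τ) = s ∧ τ = s ^ 2 / 2 :=
  ⟨√(2 * τ), by positivity, rfl, by rw [Real.sq_sqrt (by positivity)]; ring⟩

lemma hasDerivAt_sqrt_two_mul {τ : ℝ} (hτ : τ ≠ 0) :
    HasDerivAt (fun t => √(2 * t)) (√(2 * τ))⁻¹ τ :=
  ((Real.hasDerivAt_sqrt (mul_ne_zero two_ne_zero hτ)).comp τ
    ((hasDerivAt_id τ).const_mul 2)).congr_deriv (by field_simp)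

section PartialDerivatives

variable (a : ℝ) {τ : ℝ} (η : ℝ)

lemma hasDerivAt_Phi_denom_fst :
    HasDerivAt (fun t => 3 * (a^2*η^2 + t^2)^2) (12 * (a^2*η^2 + τ^2) * τ) τ :=
  ((((hasDerivAt_pow 2 τ).const_add (a^2*η^2)).pow 2).const_mul 3).congr_deriv (by ring)

lemma hasDerivAt_Phi_denom_snd :
    HasDerivAt (fun e => 3 * (a^2*e^2 + τ^2)^2) (12 * (a^2*η^2 + τ^2) * (a^2*η)) η :=
  (((((hasDerivAt_pow 2 η).const_mul (a^2)).add_const (τ^2)).pow 2).const_mul 3).congr_deriv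
    (by ring)

lemma hasDerivAt_Phi1_fst (hτ : 0 < τ) :
    HasDerivAt (fun t => Phi1 a t η)
      ((3*(a^2*η^2)^2 - 26*(a^2*η^2)*τ^2 + 3*τ^4) / (3 * √(2*τ) * (a^2*η^2 + τ^2)^3)) τ := by
  have hnum : HasDerivAt (fun t => √(2*t) * (3*a^2*η^2 - t^2))
      ((√(2*τ))⁻¹ * (3*a^2*η^2 - τ^2) + √(2*τ) * -(2*τ)) τ :=
    (hasDerivAt_sqrt_two_mul hτ.ne').mul
      (((hasDerivAt_pow 2 τ).const_sub (3*a^2*η^2)).congr_deriv (by ring))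
  refine (hnum.div (hasDerivAt_Phi_denom_fst a η) (by positivity)).congr_deriv ?_
  obtain ⟨s, hs, hsqrt, rfl⟩ := exists_sqrt_two_mul_eq hτ
  rw [hsqrt]
  field_simp
  ring

lemma hasDerivAt_Phi1_snd (hτ : τ ≠ 0) :
    HasDerivAt (fun e => Phi1 a τ e)
      (2*a^2*η * √(2*τ) * (5*τ^2 - 3*(a^2*η^2)) / (3 * (a^2*η^2 + τ^2)^3)) η := by
  have hnum : HasDerivAt (fun e => √(2*τ) * (3*a^2*e^2 - τ^2)) (√(2*τ) * (6*a^2*η)) η :=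
    ((((hasDerivAt_pow 2 η).const_mul (3*a^2)).sub_const (τ^2)).congr_deriv (by ring)).const_mul _
  refine (hnum.div (hasDerivAt_Phi_denom_snd a η) (by positivity)).congr_deriv ?_
  field_simp
  ring

lemma hasDerivAt_Phi2_fst (hτ : 0 < τ) :
    HasDerivAt (fun t => Phi2 a t η)
      (2*a^2*η * √(2*τ) * (3*(a^2*η^2) - 5*τ^2) / (3 * (a^2*η^2 + τ^2)^3)) τ := by
  have hnum : HasDerivAt (fun t => 2*a^2*η * √(2*t)^3)
      (2*a^2*η * (3 * √(2*τ)^2 * (√(2*τ))⁻¹)) τ :=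
    (((hasDerivAt_sqrt_two_mul hτ.ne').pow 3).congr_deriv (by norm_num)).const_mul _
  refine (hnum.div (hasDerivAt_Phi_denom_fst a η) (by positivity)).congr_deriv ?_
  obtain ⟨s, hs, hsqrt, rfl⟩ := exists_sqrt_two_mul_eq hτ
  rw [hsqrt]
  field_simp
  ring

lemma hasDerivAt_Phi2_snd (hτ : τ ≠ 0) :
    HasDerivAt (fun e => Phi2 a τ e)
      (2*a^2 * √(2*τ)^3 * (τ^2 - 3*(a^2*η^2)) / (3 * (a^2*η^2 + τ^2)^3)) η := by
  have hnum : HasDerivAt (fun e => 2*a^2*e * √(2*τ)^3) (2*a^2 * √(2*τ)^3) η :=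
    (((hasDerivAt_id η).const_mul (2*a^2)).mul_const _).congr_deriv (by ring)
  refine (hnum.div (hasDerivAt_Phi_denom_snd a η) (by positivity)).congr_deriv ?_
  field_simp
  ring

end PartialDerivatives

lemma differentiableAt_Phi (a : ℝ) {τ : ℝ} (η : ℝ) (hτ : 0 < τ) :
    DifferentiableAt ℝ (fun p : ℝ × ℝ => (Phi1 a p.1 p.2, Phi2 a p.1 p.2)) (τ, η) := by
  unfold Phi1 Phi2
  fun_prop (disch := positivity)

/-- The closed-form period map of Family 1 is differentiable on `{τ > 0}`, its Jacobian
determinant equals `4a²τ(3a²η² + τ²)/(3(a²η² + τ²)⁴)`, and the latter is positive when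
`a ≠ 0`. -/
theorem stmt_11 (a : ℝ) :
    (∀ τ η : ℝ, 0 < τ →
      DifferentiableAt ℝ (fun p : ℝ × ℝ => (Phi1 a p.1 p.2, Phi2 a p.1 p.2)) (τ, η)) ∧
    (∀ τ η : ℝ, 0 < τ →
      deriv (fun t => Phi1 a t η) τ * deriv (fun e => Phi2 a τ e) η
        - deriv (fun e => Phi1 a τ e) η * deriv (fun t => Phi2 a t η) τ
        = 4*a^2*τ*(3*a^2*η^2 + τ^2) / (3*(a^2*η^2 + τ^2)^4)) ∧
    (a ≠ 0 → ∀ τ η : ℝ, 0 < τ →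
      0 < 4*a^2*τ*(3*a^2*η^2 + τ^2) / (3*(a^2*η^2 + τ^2)^4)) := by
  refine ⟨fun τ η hτ => differentiableAt_Phi a η hτ, fun τ η hτ => ?_,
    fun ha τ η hτ => by positivity⟩
  rw [(hasDerivAt_Phi1_fst a η hτ).deriv, (hasDerivAt_Phi2_snd a η hτ.ne').deriv,
    (hasDerivAt_Phi1_snd a η hτ.ne').deriv, (hasDerivAt_Phi2_fst a η hτ).deriv]
  obtain ⟨s, hs, hsqrt, rfl⟩ := exists_sqrt_two_mul_eq hτ
  rw [hsqrt]
  field_simp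
  ring
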